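/- For any two probability measures $P$ and $Q$ on a common measurable space and any measurable event $A$, it holds that $P(A) + Q(A^c) \ge \tfrac{1}{2} \exp(-D_{KL}(P \| Q))$, where $D_{KL}$ denotes the Kullback–Leibler divergence. -/

import Mathlib

open MeasureTheory ENNReal

/-- KL divergence of `P` w.r.t. `Q`: `∫ log (dP/dQ) dP` when `P ≪ Q` (and the
integral makes sense), `∞` otherwise. -/
noncomputable def klDiv {Ω : Type*} [MeasurableSpace Ω] (P Q : Measure Ω) : ℝ≥0∞ :=
  open Classical in
  if P ≪ Q ∧ Integrable (llr P Q) P then ENNReal.ofReal (∫ x, llr P Q x ∂P) else ⊤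

/-- `exp(-k)` for `k : ℝ≥0∞`, with `exp(-∞) = 0`. -/
noncomputable def expNeg (k : ℝ≥0∞) : ℝ :=
  if k = ⊤ then 0 else Real.exp (-k.toReal)

/-! Squeeze the Bhattacharyya coefficient `BC = ∫ √(dP/dQ) dQ = ∫ exp (-llr / 2) dP`.
Jensen's inequality for `exp` gives `exp (-KL / 2) ≤ BC`. Splitting `BC` over `A` and `Aᶜ` and
applying Cauchy–Schwarz on each piece, and then once more in `ℝ²`,
`BC ≤ √(P A · Q A) + √(P Aᶜ · Q Aᶜ) ≤ √((P A + Q Aᶜ) (Q A + P Aᶜ)) ≤ √(2 (P A + Q Aᶜ))`. -/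

open Real

lemma mul_exp_neg_log_div_two {t : ℝ} (ht : 0 ≤ t) : t * exp (-log t / 2) = √t := by
  rcases ht.eq_or_lt with rfl | ht
  · simp
  · rw [sqrt_eq_rpow, rpow_def_of_pos ht]
    nth_rewrite 1 [← exp_log ht]
    rw [← exp_add]
    ring_nf

lemma sq_sqrt_mul_sqrt_add_sqrt_mul_sqrt_le {a b c d : ℝ} (ha : 0 ≤ a) (hb : 0 ≤ b) (hc : 0 ≤ c)
    (hd : 0 ≤ d) : (√a * √b + √c * √d) ^ 2 ≤ (a + d) * (b + c) := by
  nlinarith [sq_sqrt ha, sq_sqrt hb, sq_sqrt hc, sq_sqrt hd,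
    sq_nonneg (√a * √c - √b * √d)]

lemma expNeg_ofReal_le (x : ℝ) : expNeg (ENNReal.ofReal x) ≤ exp (-x) := by
  rw [expNeg, if_neg ofReal_ne_top, exp_le_exp, neg_le_neg_iff]
  exact le_max_left _ _

namespace MeasureTheory.Measure

variable {Ω : Type*} [MeasurableSpace Ω] {P Q : Measure Ω}

lemma memLp_two_sqrt_toReal_rnDeriv [IsFiniteMeasure P] :
    MemLp (fun x ↦ √(P.rnDeriv Q x).toReal) 2 Q := by
  refine (memLp_two_iff_integrable_sq
    (measurable_rnDeriv P Q).ennreal_toReal.sqrt.aestronglyMeasurable).2 ?_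
  simpa only [sq_sqrt toReal_nonneg] using integrable_toReal_rnDeriv

lemma integral_exp_neg_llr_div_two [SigmaFinite P] [SigmaFinite Q] (hPQ : P ≪ Q) :
    ∫ x, exp (-llr P Q x / 2) ∂P = ∫ x, √(P.rnDeriv Q x).toReal ∂Q := by
  rw [← integral_rnDeriv_smul hPQ]
  exact integral_congr_ae (.of_forall fun x ↦ mul_exp_neg_log_div_two toReal_nonneg)

lemma integrable_exp_neg_llr_div_two [IsFiniteMeasure P] [IsFiniteMeasure Q] (hPQ : P ≪ Q) :
    Integrable (fun x ↦ exp (-llr P Q x / 2)) P := by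
  refine (integrable_rnDeriv_smul_iff hPQ).1 ?_
  simp only [smul_eq_mul, llr, mul_exp_neg_log_div_two toReal_nonneg]
  exact memLp_two_sqrt_toReal_rnDeriv.integrable one_le_two

lemma exp_neg_integral_llr_div_two_le [IsProbabilityMeasure P] [IsFiniteMeasure Q]
    (hPQ : P ≪ Q) (hint : Integrable (llr P Q) P) :
    exp (-(∫ x, llr P Q x ∂P) / 2) ≤ ∫ x, √(P.rnDeriv Q x).toReal ∂Q := by
  rw [← integral_exp_neg_llr_div_two hPQ, ← integral_neg, ← integral_div]
  exact convexOn_exp.map_integral_le continuous_exp.continuousOn isClosed_univ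
    (.of_forall fun _ ↦ Set.mem_univ _) (hint.neg.div_const 2)
    (integrable_exp_neg_llr_div_two hPQ)

lemma setIntegral_sqrt_toReal_rnDeriv_le [IsFiniteMeasure P] [IsFiniteMeasure Q] (hPQ : P ≪ Q)
    (s : Set Ω) : ∫ x in s, √(P.rnDeriv Q x).toReal ∂Q ≤ √(P.real s) * √(Q.real s) := by
  have hCS := integral_mul_le_Lp_mul_Lq_of_nonneg .two_two (μ := Q.restrict s)
    (f := fun x ↦ √(P.rnDeriv Q x).toReal) (g := fun _ ↦ 1)
    (.of_forall fun _ ↦ sqrt_nonneg _) (.of_forall fun _ ↦ zero_le_one)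
    (by simpa using memLp_two_sqrt_toReal_rnDeriv.restrict s) (by simpa using memLp_const 1)
  simpa only [one_pow, mul_one, Real.rpow_two, sq_sqrt toReal_nonneg, setIntegral_toReal_rnDeriv hPQ,
    integral_const, smul_eq_mul, measureReal_restrict_apply_univ, ← sqrt_eq_rpow] using hCS

lemma integral_sqrt_toReal_rnDeriv_le [IsFiniteMeasure P] [IsFiniteMeasure Q] (hPQ : P ≪ Q)
    {s : Set Ω} (hs : MeasurableSet s) :
    ∫ x, √(P.rnDeriv Q x).toReal ∂Q ≤ √(P.real s) * √(Q.real s) + √(P.real sᶜ) * √(Q.real sᶜ) := by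
  rw [← integral_add_compl hs (memLp_two_sqrt_toReal_rnDeriv.integrable one_le_two)]
  exact add_le_add (setIntegral_sqrt_toReal_rnDeriv_le hPQ s)
    (setIntegral_sqrt_toReal_rnDeriv_le hPQ sᶜ)

lemma exp_neg_integral_llr_le [IsProbabilityMeasure P] [IsProbabilityMeasure Q] (hPQ : P ≪ Q)
    (hint : Integrable (llr P Q) P) {s : Set Ω} (hs : MeasurableSet s) :
    exp (-∫ x, llr P Q x ∂P) ≤ 2 * (P.real s + Q.real sᶜ) := by
  set K := ∫ x, llr P Q x ∂P
  have hBC : exp (-K / 2) ≤ √(P.real s) * √(Q.real s) + √(P.real sᶜ) * √(Q.real sᶜ) :=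
    (exp_neg_integral_llr_div_two_le hPQ hint).trans (integral_sqrt_toReal_rnDeriv_le hPQ hs)
  calc exp (-K) = exp (-K / 2) ^ 2 := by rw [← exp_nat_mul]; ring_nf
    _ ≤ (√(P.real s) * √(Q.real s) + √(P.real sᶜ) * √(Q.real sᶜ)) ^ 2 := by gcongr
    _ ≤ (P.real s + Q.real sᶜ) * (Q.real s + P.real sᶜ) :=
      sq_sqrt_mul_sqrt_add_sqrt_mul_sqrt_le measureReal_nonneg measureReal_nonneg
        measureReal_nonneg measureReal_nonneg
    _ ≤ (P.real s + Q.real sᶜ) * 2 := by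
      gcongr
      linarith [measureReal_le_one (μ := Q) (s := s), measureReal_le_one (μ := P) (s := sᶜ)]
    _ = 2 * (P.real s + Q.real sᶜ) := mul_comm _ _

end MeasureTheory.Measure

/-- Bretagnolle–Huber inequality. -/
theorem stmt3 {Ω : Type*} [MeasurableSpace Ω] (P Q : Measure Ω)
    [IsProbabilityMeasure P] [IsProbabilityMeasure Q]
    (A : Set Ω) (hA : MeasurableSet A) :
    (1 / 2 : ℝ) * expNeg (klDiv P Q) ≤ (P A).toReal + (Q Aᶜ).toReal := by
  by_cases h : P ≪ Q ∧ Integrable (llr P Q) P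
  · rw [klDiv, if_pos h]
    have hexp := (expNeg_ofReal_le _).trans (Measure.exp_neg_integral_llr_le h.1 h.2 hA)
    rw [measureReal_def, measureReal_def] at hexp
    linarith
  · rw [klDiv, if_neg h, expNeg, if_pos rfl, mul_zero]
    positivity
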